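/- arXiv:1911.06025 — 10 statements merged into one kernel-verified Lean document; each statement's English description precedes it below -/
import Mathlib

section
/- Assume νˢ ≠ 1 (so D ≠ 0). Then the point v₂ (gen-free-1) with coordinates x₁ = −ζˢ/D, x₂ = 0, yˢ = −ζˢ(ζˢ + D)/(D²γˢ), y₁ = 0, y₂ = 0, zˢ = 1/αˢ + ζˢ/(αˢD), z = 0 is an equilibrium of F, i.e. F(v₂) = 0. -/
/-!
On the face x₂ = y₁ = y₂ = z = 0 the components F₂, F₄, F₅, F₇ vanish identically, and F₁, F₃, F₆
reduce to x₁(1 − x₁ − αˢzˢ), αˢzˢx₁ − γˢyˢ and γˢyˢ − νˢαˢzˢx₁ − ζˢzˢ. Since F₃ + F₆ = −zˢ(Dx₁ + ζˢ),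
these vanish as soon as αˢzˢ = 1 − x₁, γˢyˢ = αˢzˢx₁ and Dx₁ = −ζˢ, and v₂ is the solution of
these three relations.
-/

theorem reduced_equilibrium_equations_of_relations {αs γs νs ζs x₁ ys zs : ℝ}
    (hzs : αs * zs = 1 - x₁) (hys : γs * ys = αs * zs * x₁)
    (hx₁ : αs * (νs - 1) * x₁ = -ζs) :
    x₁ * (1 - x₁) - αs * x₁ * zs = 0 ∧
    αs * zs * x₁ - γs * ys = 0 ∧
    γs * ys - νs * αs * zs * x₁ - ζs * zs = 0 :=
  ⟨by linear_combination (-x₁) * hzs, by linear_combination -hys,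
    by linear_combination hys - zs * hx₁⟩

theorem v₂_gen_free_1_is_equilibrium_general
    (α αs β₁ β₂ μ γs γ₁ γ₂ κ₁ κ₂ ν νs ζs ζ : ℝ)
    (hαs : 0 < αs)
    (hγs : 0 < γs)
    (hνs1 : νs ≠ 1)
    (D : ℝ) (hD : D = αs * (νs - 1))
    (x₁ x₂ ys y₁ y₂ zs z : ℝ)
    (hx₁ : x₁ = -ζs / D) (hx₂ : x₂ = 0)
    (hys : ys = -(ζs * (ζs + D)) / (D ^ 2 * γs))
    (hy₁ : y₁ = 0) (hy₂ : y₂ = 0)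
    (hzs : zs = 1 / αs + ζs / (αs * D)) (hz : z = 0) :
    x₁ * (1 - x₁ - x₂) - α * x₁ * z - αs * x₁ * zs = 0 ∧
    x₂ * (β₁ - β₂ * (x₁ + x₂)) - α * x₂ * z = 0 ∧
    αs * zs * x₁ + μ * y₁ - γs * ys = 0 ∧
    α * z * x₁ - (μ + γ₁) * y₁ = 0 ∧
    α * z * x₂ - γ₂ * y₂ = 0 ∧
    γs * ys - νs * αs * zs * x₁ - ζs * zs = 0 ∧
    κ₁ * γ₁ * y₁ + κ₂ * γ₂ * y₂ - ν * α * z * (x₁ + x₂) - ζ * z = 0 := by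
  have hD0 : D ≠ 0 := hD ▸ mul_ne_zero hαs.ne' (sub_ne_zero.mpr hνs1)
  have hzs_rel : αs * zs = 1 - x₁ := by
    rw [hzs, hx₁]; field_simp; ring
  have hys_rel : γs * ys = αs * zs * x₁ := by
    rw [hzs_rel, hys, hx₁]; field_simp; ring
  have hx₁_rel : αs * (νs - 1) * x₁ = -ζs := by
    rw [← hD, hx₁]; field_simp
  obtain ⟨h₁, h₃, h₆⟩ := reduced_equilibrium_equations_of_relations hzs_rel hys_rel hx₁_rel
  subst hx₂ hy₁ hy₂ hz
  exact ⟨by linear_combination h₁, by ring, by linear_combination h₃, by ring, by ring,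
    h₆, by ring⟩

theorem v₂_gen_free_1_is_equilibrium
    (α αs β₁ β₂ μ γs γ₁ γ₂ κ₁ κ₂ ν νs ζs ζ : ℝ)
    (hα : 0 < α) (hαs : 0 < αs) (hβ₁pos : 0 < β₁) (hβ₂pos : 0 < β₂)
    (hμ : 0 < μ) (hγs : 0 < γs) (hγ₁ : 0 < γ₁) (hγ₂ : 0 < γ₂)
    (hκ₁ : 0 < κ₁) (hκ₂ : 0 < κ₂) (hν : 0 < ν) (hνs : 0 < νs)
    (hζs : 0 < ζs) (hζ : 0 < ζ)
    (hνs1 : νs ≠ 1)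
    (D : ℝ) (hD : D = αs * (νs - 1))
    (x₁ x₂ ys y₁ y₂ zs z : ℝ)
    (hx₁ : x₁ = -ζs / D) (hx₂ : x₂ = 0)
    (hys : ys = -(ζs * (ζs + D)) / (D ^ 2 * γs))
    (hy₁ : y₁ = 0) (hy₂ : y₂ = 0)
    (hzs : zs = 1 / αs + ζs / (αs * D)) (hz : z = 0) :
    x₁ * (1 - x₁ - x₂) - α * x₁ * z - αs * x₁ * zs = 0 ∧
    x₂ * (β₁ - β₂ * (x₁ + x₂)) - α * x₂ * z = 0 ∧
    αs * zs * x₁ + μ * y₁ - γs * ys = 0 ∧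
    α * z * x₁ - (μ + γ₁) * y₁ = 0 ∧
    α * z * x₂ - γ₂ * y₂ = 0 ∧
    γs * ys - νs * αs * zs * x₁ - ζs * zs = 0 ∧
    κ₁ * γ₁ * y₁ + κ₂ * γ₂ * y₂ - ν * α * z * (x₁ + x₂) - ζ * z = 0 :=
  v₂_gen_free_1_is_equilibrium_general α αs β₁ β₂ μ γs γ₁ γ₂ κ₁ κ₂ ν νs ζs ζ hαs hγs hνs1 D hD x₁ x₂
    ys y₁ y₂ zs z hx₁ hx₂ hys hy₁ hy₂ hzs hz
end

section
/- Assume A ≠ 0, set x₁ = ζ/A, and assume E := αζˢ/(C·x₁) + αˢ + Dα/C ≠ 0. Then the point v₃ (coex-1) with coordinates x₁ = ζ/A, x₂ = 0, zˢ = (1 − x₁)/E, z = (1 − x₁ − αˢ·zˢ)/α, y₁ = (C/μ)·x₁·z, y₂ = 0, yˢ = (x₁/γˢ)·(C·z + αˢ·zˢ) is an equilibrium of F, i.e. F(v₃) = 0. -/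
/-!
Once y₁ and yˢ are eliminated through their defining formulas, F₃ and F₄ vanish identically and
F₁ is the defining equation α z = 1 − x₁ − αˢ zˢ of z. Using that equation, F₆ becomes
(C x₁ / α) (1 − x₁ − zˢ E), which vanishes by the choice of zˢ, and F₇ factors as z (A x₁ − ζ),
which vanishes by the choice of x₁.
-/

namespace HostPathogen

variable {K : Type*} [Field K]

lemma add_mul_C_div_eq {α μ γ₁ C : K} (hμ : μ ≠ 0) (hμγ : μ + γ₁ ≠ 0)
    (hC : C = α * μ / (μ + γ₁)) : (μ + γ₁) * (C / μ) = α := by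
  rw [hC]
  field_simp

lemma A_eq_C_div_mul_sub {α μ γ₁ κ₁ ν A C : K} (hμ : μ ≠ 0) (hμγ : μ + γ₁ ≠ 0)
    (hA : A = α * (γ₁ * κ₁ / (μ + γ₁) - ν)) (hC : C = α * μ / (μ + γ₁)) :
    A = C / μ * (γ₁ * κ₁) - α * ν := by
  rw [hA, hC]
  field_simp

lemma C_mul_mul_z_eq {α αs ζs C D x₁ zs z : K} (hα : α ≠ 0) (hC : C ≠ 0) (hx₁ : x₁ ≠ 0)
    (hE : α * ζs / (C * x₁) + αs + D * α / C ≠ 0)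
    (hzs : zs = (1 - x₁) / (α * ζs / (C * x₁) + αs + D * α / C))
    (hαz : α * z = 1 - x₁ - αs * zs) :
    C * x₁ * z = zs * (ζs + D * x₁) := by
  have hzsE : zs * (α * ζs / (C * x₁) + αs + D * α / C) = 1 - x₁ := by
    rw [hzs]
    exact div_mul_cancel₀ (1 - x₁) hE
  field_simp at hzsE
  apply mul_left_cancel₀ hα
  linear_combination C * x₁ * hαz - hzsE

end HostPathogen

theorem v₃_coex_1_is_equilibrium_general
    (α αs β₁ β₂ μ γs γ₁ γ₂ κ₁ κ₂ ν νs ζs ζ : ℝ)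
    (hα : 0 < α)
    (hμ : 0 < μ) (hγs : 0 < γs) (hγ₁ : 0 < γ₁)
    (hζ : 0 < ζ)
    (A : ℝ) (hA : A = α * (γ₁ * κ₁ / (μ + γ₁) - ν))
    (C : ℝ) (hC : C = α * μ / (μ + γ₁))
    (D : ℝ) (hD : D = αs * (νs - 1))
    (hA0 : A ≠ 0)
    (x₁ x₂ ys y₁ y₂ zs z : ℝ)
    (hx₁ : x₁ = ζ / A)
    (hE : α * ζs / (C * x₁) + αs + D * α / C ≠ 0)
    (hx₂ : x₂ = 0)
    (hzs : zs = (1 - x₁) / (α * ζs / (C * x₁) + αs + D * α / C))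
    (hz : z = (1 - x₁ - αs * zs) / α)
    (hy₁ : y₁ = (C / μ) * x₁ * z) (hy₂ : y₂ = 0)
    (hys : ys = (x₁ / γs) * (C * z + αs * zs)) :
    x₁ * (1 - x₁ - x₂) - α * x₁ * z - αs * x₁ * zs = 0 ∧
    x₂ * (β₁ - β₂ * (x₁ + x₂)) - α * x₂ * z = 0 ∧
    αs * zs * x₁ + μ * y₁ - γs * ys = 0 ∧
    α * z * x₁ - (μ + γ₁) * y₁ = 0 ∧
    α * z * x₂ - γ₂ * y₂ = 0 ∧
    γs * ys - νs * αs * zs * x₁ - ζs * zs = 0 ∧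
    κ₁ * γ₁ * y₁ + κ₂ * γ₂ * y₂ - ν * α * z * (x₁ + x₂) - ζ * z = 0 := by
  have hμγ : μ + γ₁ ≠ 0 := by positivity
  have hC0 : C ≠ 0 := by rw [hC]; positivity
  have hx₁0 : x₁ ≠ 0 := by rw [hx₁]; exact div_ne_zero hζ.ne' hA0
  have hAx : A * x₁ = ζ := by rw [hx₁]; field_simp
  have hαz : α * z = 1 - x₁ - αs * zs := by rw [hz]; field_simp
  have hμy₁ : μ * y₁ = C * x₁ * z := by rw [hy₁]; field_simp
  have hγys : γs * ys = x₁ * (C * z + αs * zs) := by rw [hys]; field_simp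
  have hCμ := HostPathogen.add_mul_C_div_eq hμ.ne' hμγ hC
  have hAC := HostPathogen.A_eq_C_div_mul_sub (κ₁ := κ₁) (ν := ν) hμ.ne' hμγ hA hC
  have hCz := HostPathogen.C_mul_mul_z_eq hα.ne' hC0 hx₁0 hE hzs hαz
  subst hx₂ hy₂
  refine ⟨?_, ?_, ?_, ?_, ?_, ?_, ?_⟩
  · linear_combination -x₁ * hαz
  · ring
  · linear_combination hμy₁ - hγys
  · linear_combination -(x₁ * z) * hCμ - (μ + γ₁) * hy₁
  · ring
  · linear_combination hγys + hCz + zs * x₁ * hD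
  · linear_combination κ₁ * γ₁ * hy₁ - x₁ * z * hAC + z * hAx

theorem v₃_coex_1_is_equilibrium
    (α αs β₁ β₂ μ γs γ₁ γ₂ κ₁ κ₂ ν νs ζs ζ : ℝ)
    (hα : 0 < α) (hαs : 0 < αs) (hβ₁pos : 0 < β₁) (hβ₂pos : 0 < β₂)
    (hμ : 0 < μ) (hγs : 0 < γs) (hγ₁ : 0 < γ₁) (hγ₂ : 0 < γ₂)
    (hκ₁ : 0 < κ₁) (hκ₂ : 0 < κ₂) (hν : 0 < ν) (hνs : 0 < νs)
    (hζs : 0 < ζs) (hζ : 0 < ζ)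
    (A : ℝ) (hA : A = α * (γ₁ * κ₁ / (μ + γ₁) - ν))
    (C : ℝ) (hC : C = α * μ / (μ + γ₁))
    (D : ℝ) (hD : D = αs * (νs - 1))
    (hA0 : A ≠ 0)
    (x₁ x₂ ys y₁ y₂ zs z : ℝ)
    (hx₁ : x₁ = ζ / A)
    (hE : α * ζs / (C * x₁) + αs + D * α / C ≠ 0)
    (hx₂ : x₂ = 0)
    (hzs : zs = (1 - x₁) / (α * ζs / (C * x₁) + αs + D * α / C))
    (hz : z = (1 - x₁ - αs * zs) / α)
    (hy₁ : y₁ = (C / μ) * x₁ * z) (hy₂ : y₂ = 0)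
    (hys : ys = (x₁ / γs) * (C * z + αs * zs)) :
    x₁ * (1 - x₁ - x₂) - α * x₁ * z - αs * x₁ * zs = 0 ∧
    x₂ * (β₁ - β₂ * (x₁ + x₂)) - α * x₂ * z = 0 ∧
    αs * zs * x₁ + μ * y₁ - γs * ys = 0 ∧
    α * z * x₁ - (μ + γ₁) * y₁ = 0 ∧
    α * z * x₂ - γ₂ * y₂ = 0 ∧
    γs * ys - νs * αs * zs * x₁ - ζs * zs = 0 ∧
    κ₁ * γ₁ * y₁ + κ₂ * γ₂ * y₂ - ν * α * z * (x₁ + x₂) - ζ * z = 0 :=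
  v₃_coex_1_is_equilibrium_general α αs β₁ β₂ μ γs γ₁ γ₂ κ₁ κ₂ ν νs ζs ζ hα hμ hγs hγ₁ hζ A hA C hC
    D hD hA0 x₁ x₂ ys y₁ y₂ zs z hx₁ hE hx₂ hzs hz hy₁ hy₂ hys
end

section
/- Assume κ₂ ≠ ν (so B ≠ 0). Then the point v₅ (spec-free) with coordinates x₁ = 0, x₂ = ζ/B, yˢ = 0, y₁ = 0, y₂ = ζ(β₁B − β₂ζ)/(B²γ₂), zˢ = 0, z = β₁/α − β₂ζ/(αB) is an equilibrium of F, i.e. F(v₅) = 0. -/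
/-! On the face x₁ = yˢ = y₁ = zˢ = 0 only F₂, F₅ and F₇ are not identically zero. They vanish
once α z = β₁ − β₂ x₂ and γ₂ y₂ = α z x₂, since then F₇ = z (B x₂ − ζ); so it suffices that
B x₂ = ζ. The coordinates of v₅ solve these three relations, which is where B ≠ 0 and γ₂ ≠ 0
enter. -/

theorem isEquilibrium_of_specialistFree {α αs β₁ β₂ μ γs γ₁ γ₂ κ₁ κ₂ ν νs ζs ζ : ℝ}
    {x₁ x₂ ys y₁ y₂ zs z : ℝ} (hx₁ : x₁ = 0) (hys : ys = 0) (hy₁ : y₁ = 0) (hzs : zs = 0)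
    (hz : α * z = β₁ - β₂ * x₂) (hy₂ : γ₂ * y₂ = α * z * x₂) (hx₂ : α * (κ₂ - ν) * x₂ = ζ) :
    x₁ * (1 - x₁ - x₂) - α * x₁ * z - αs * x₁ * zs = 0 ∧
    x₂ * (β₁ - β₂ * (x₁ + x₂)) - α * x₂ * z = 0 ∧
    αs * zs * x₁ + μ * y₁ - γs * ys = 0 ∧
    α * z * x₁ - (μ + γ₁) * y₁ = 0 ∧
    α * z * x₂ - γ₂ * y₂ = 0 ∧
    γs * ys - νs * αs * zs * x₁ - ζs * zs = 0 ∧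
    κ₁ * γ₁ * y₁ + κ₂ * γ₂ * y₂ - ν * α * z * (x₁ + x₂) - ζ * z = 0 := by
  subst hx₁ hys hy₁ hzs
  refine ⟨by ring, ?_, by ring, by ring, ?_, by ring, ?_⟩
  · linear_combination (-x₂) * hz
  · linear_combination -hy₂
  · linear_combination κ₂ * hy₂ + z * hx₂

theorem v₅_spec_free_is_equilibrium_general
    (α αs β₁ β₂ μ γs γ₁ γ₂ κ₁ κ₂ ν νs ζs ζ : ℝ)
    (hα : 0 < α) (hγ₂ : 0 < γ₂)
    (hκν : κ₂ ≠ ν)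
    (B : ℝ) (hB : B = α * (κ₂ - ν))
    (x₁ x₂ ys y₁ y₂ zs z : ℝ)
    (hx₁ : x₁ = 0) (hx₂ : x₂ = ζ / B)
    (hys : ys = 0) (hy₁ : y₁ = 0)
    (hy₂ : y₂ = ζ * (β₁ * B - β₂ * ζ) / (B ^ 2 * γ₂))
    (hzs : zs = 0) (hz : z = β₁ / α - β₂ * ζ / (α * B)) :
    x₁ * (1 - x₁ - x₂) - α * x₁ * z - αs * x₁ * zs = 0 ∧
    x₂ * (β₁ - β₂ * (x₁ + x₂)) - α * x₂ * z = 0 ∧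
    αs * zs * x₁ + μ * y₁ - γs * ys = 0 ∧
    α * z * x₁ - (μ + γ₁) * y₁ = 0 ∧
    α * z * x₂ - γ₂ * y₂ = 0 ∧
    γs * ys - νs * αs * zs * x₁ - ζs * zs = 0 ∧
    κ₁ * γ₁ * y₁ + κ₂ * γ₂ * y₂ - ν * α * z * (x₁ + x₂) - ζ * z = 0 := by
  have hB₀ : B ≠ 0 := hB ▸ mul_ne_zero hα.ne' (sub_ne_zero.mpr hκν)
  have hBx₂ : B * x₂ = ζ := by
    rw [hx₂]
    field_simp
  have hαz : α * z = β₁ - β₂ * x₂ := by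
    rw [hz, hx₂]
    field_simp
  have hγy : γ₂ * y₂ = α * z * x₂ := by
    rw [hy₂, hαz, hx₂]
    field_simp
  exact isEquilibrium_of_specialistFree hx₁ hys hy₁ hzs hαz hγy (hB ▸ hBx₂)

theorem v₅_spec_free_is_equilibrium
    (α αs β₁ β₂ μ γs γ₁ γ₂ κ₁ κ₂ ν νs ζs ζ : ℝ)
    (hα : 0 < α) (hαs : 0 < αs) (hβ₁pos : 0 < β₁) (hβ₂pos : 0 < β₂)
    (hμ : 0 < μ) (hγs : 0 < γs) (hγ₁ : 0 < γ₁) (hγ₂ : 0 < γ₂)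
    (hκ₁ : 0 < κ₁) (hκ₂ : 0 < κ₂) (hν : 0 < ν) (hνs : 0 < νs)
    (hζs : 0 < ζs) (hζ : 0 < ζ)
    (hκν : κ₂ ≠ ν)
    (B : ℝ) (hB : B = α * (κ₂ - ν))
    (x₁ x₂ ys y₁ y₂ zs z : ℝ)
    (hx₁ : x₁ = 0) (hx₂ : x₂ = ζ / B)
    (hys : ys = 0) (hy₁ : y₁ = 0)
    (hy₂ : y₂ = ζ * (β₁ * B - β₂ * ζ) / (B ^ 2 * γ₂))
    (hzs : zs = 0) (hz : z = β₁ / α - β₂ * ζ / (α * B)) :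
    x₁ * (1 - x₁ - x₂) - α * x₁ * z - αs * x₁ * zs = 0 ∧
    x₂ * (β₁ - β₂ * (x₁ + x₂)) - α * x₂ * z = 0 ∧
    αs * zs * x₁ + μ * y₁ - γs * ys = 0 ∧
    α * z * x₁ - (μ + γ₁) * y₁ = 0 ∧
    α * z * x₂ - γ₂ * y₂ = 0 ∧
    γs * ys - νs * αs * zs * x₁ - ζs * zs = 0 ∧
    κ₁ * γ₁ * y₁ + κ₂ * γ₂ * y₂ - ν * α * z * (x₁ + x₂) - ζ * z = 0 :=
  v₅_spec_free_is_equilibrium_general α αs β₁ β₂ μ γs γ₁ γ₂ κ₁ κ₂ ν νs ζs ζ hα hγ₂ hκν B hB x₁ x₂ ys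
    y₁ y₂ zs z hx₁ hx₂ hys hy₁ hy₂ hzs hz
end

section
/- Assume νˢ ≠ 1 (so D ≠ 0). Then the point v₆ (gen-free-2) with coordinates x₁ = −ζˢ/D, x₂ = β₁/β₂ + ζˢ/D, yˢ = (β₁ − β₂)ζˢ/(Dβ₂γˢ), y₁ = 0, y₂ = 0, zˢ = (β₂ − β₁)/(αˢβ₂), z = 0 is an equilibrium of F, i.e. F(v₆) = 0. -/
/-! On the face `y₁ = y₂ = z = 0` the system reduces to four relations: the hosts sit at the
carrying capacity `x₁ + x₂ = β₁ / β₂` of the second host, `αˢ zˢ = 1 - x₁ - x₂` balances the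
growth of the first host, `γˢ yˢ = αˢ zˢ x₁` balances the infected class, and `D x₁ = -ζˢ`
balances the free pathogen. The explicit point `v₆` satisfies all four. -/

theorem pathogen_free_equilibrium_of_relations
    (α αs β₁ β₂ μ γs γ₁ γ₂ κ₁ κ₂ ν νs ζs ζ x₁ x₂ ys zs : ℝ)
    (hsum : β₂ * (x₁ + x₂) = β₁) (hzs : αs * zs = 1 - x₁ - x₂)
    (hys : γs * ys = αs * zs * x₁) (hx₁ : αs * (νs - 1) * x₁ = -ζs) :
    x₁ * (1 - x₁ - x₂) - α * x₁ * 0 - αs * x₁ * zs = 0 ∧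
    x₂ * (β₁ - β₂ * (x₁ + x₂)) - α * x₂ * 0 = 0 ∧
    αs * zs * x₁ + μ * 0 - γs * ys = 0 ∧
    α * 0 * x₁ - (μ + γ₁) * 0 = 0 ∧
    α * 0 * x₂ - γ₂ * 0 = 0 ∧
    γs * ys - νs * αs * zs * x₁ - ζs * zs = 0 ∧
    κ₁ * γ₁ * 0 + κ₂ * γ₂ * 0 - ν * α * 0 * (x₁ + x₂) - ζ * 0 = 0 := by
  refine ⟨?_, ?_, ?_, by ring, by ring, ?_, by ring⟩
  · linear_combination -x₁ * hzs
  · linear_combination -x₂ * hsum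
  · linear_combination -hys
  · linear_combination hys - zs * hx₁

theorem v₆_gen_free_2_is_equilibrium_general
    (α αs β₁ β₂ μ γs γ₁ γ₂ κ₁ κ₂ ν νs ζs ζ : ℝ)
    (hαs : 0 < αs) (hβ₂pos : 0 < β₂)
    (hγs : 0 < γs)
    (hνs1 : νs ≠ 1)
    (D : ℝ) (hD : D = αs * (νs - 1))
    (x₁ x₂ ys y₁ y₂ zs z : ℝ)
    (hx₁ : x₁ = -ζs / D) (hx₂ : x₂ = β₁ / β₂ + ζs / D)
    (hys : ys = (β₁ - β₂) * ζs / (D * β₂ * γs))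
    (hy₁ : y₁ = 0) (hy₂ : y₂ = 0)
    (hzs : zs = (β₂ - β₁) / (αs * β₂)) (hz : z = 0) :
    x₁ * (1 - x₁ - x₂) - α * x₁ * z - αs * x₁ * zs = 0 ∧
    x₂ * (β₁ - β₂ * (x₁ + x₂)) - α * x₂ * z = 0 ∧
    αs * zs * x₁ + μ * y₁ - γs * ys = 0 ∧
    α * z * x₁ - (μ + γ₁) * y₁ = 0 ∧
    α * z * x₂ - γ₂ * y₂ = 0 ∧
    γs * ys - νs * αs * zs * x₁ - ζs * zs = 0 ∧
    κ₁ * γ₁ * y₁ + κ₂ * γ₂ * y₂ - ν * α * z * (x₁ + x₂) - ζ * z = 0 := by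
  have hD0 : D ≠ 0 := hD ▸ mul_ne_zero hαs.ne' (sub_ne_zero.mpr hνs1)
  subst hy₁ hy₂ hz
  apply pathogen_free_equilibrium_of_relations
  · rw [hx₁, hx₂]
    field_simp
    ring
  · rw [hzs, hx₁, hx₂]
    field_simp
    ring
  · rw [hys, hzs, hx₁]
    field_simp
    ring
  · rw [← hD, hx₁]
    field_simp

theorem v₆_gen_free_2_is_equilibrium
    (α αs β₁ β₂ μ γs γ₁ γ₂ κ₁ κ₂ ν νs ζs ζ : ℝ)
    (hα : 0 < α) (hαs : 0 < αs) (hβ₁pos : 0 < β₁) (hβ₂pos : 0 < β₂)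
    (hμ : 0 < μ) (hγs : 0 < γs) (hγ₁ : 0 < γ₁) (hγ₂ : 0 < γ₂)
    (hκ₁ : 0 < κ₁) (hκ₂ : 0 < κ₂) (hν : 0 < ν) (hνs : 0 < νs)
    (hζs : 0 < ζs) (hζ : 0 < ζ)
    (hνs1 : νs ≠ 1)
    (D : ℝ) (hD : D = αs * (νs - 1))
    (x₁ x₂ ys y₁ y₂ zs z : ℝ)
    (hx₁ : x₁ = -ζs / D) (hx₂ : x₂ = β₁ / β₂ + ζs / D)
    (hys : ys = (β₁ - β₂) * ζs / (D * β₂ * γs))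
    (hy₁ : y₁ = 0) (hy₂ : y₂ = 0)
    (hzs : zs = (β₂ - β₁) / (αs * β₂)) (hz : z = 0) :
    x₁ * (1 - x₁ - x₂) - α * x₁ * z - αs * x₁ * zs = 0 ∧
    x₂ * (β₁ - β₂ * (x₁ + x₂)) - α * x₂ * z = 0 ∧
    αs * zs * x₁ + μ * y₁ - γs * ys = 0 ∧
    α * z * x₁ - (μ + γ₁) * y₁ = 0 ∧
    α * z * x₂ - γ₂ * y₂ = 0 ∧
    γs * ys - νs * αs * zs * x₁ - ζs * zs = 0 ∧
    κ₁ * γ₁ * y₁ + κ₂ * γ₂ * y₂ - ν * α * z * (x₁ + x₂) - ζ * z = 0 :=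
  v₆_gen_free_2_is_equilibrium_general α αs β₁ β₂ μ γs γ₁ γ₂ κ₁ κ₂ ν νs ζs ζ hαs hβ₂pos hγs hνs1 D
    hD x₁ x₂ ys y₁ y₂ zs z hx₁ hx₂ hys hy₁ hy₂ hzs hz
end

section
/- Assume κ₂ ≠ ν (so B ≠ 0). Let (x₁, x₂, yˢ, y₁, y₂, zˢ, z) be an equilibrium of F with x₁ ≠ 0, x₂ ≠ 0 and z ≠ 0. Then x₂ = (ζ − A·x₁)/B, z = (β₁ − β₂(x₁ + x₂))/α, zˢ = (1 − β₁ + (β₂ − 1)(x₁ + x₂))/αˢ, and x₁ satisfies the quadratic equation φ₂·x₁² + φ₁·x₁ + φ₀ = 0. -/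
/-!
At a coexistence equilibrium the factors `x₁`, `x₂` and `z` can be cancelled from `F₁`, `F₂`
and from `F₇` (after solving `F₄ = F₅ = 0` for `y₁` and `y₂`). This gives `z` and `zˢ` as affine
functions of `x₁ + x₂`, and `x₂` as an affine function of `x₁`. Solving `F₃ = F₄ = 0` for `yˢ`
and `y₁` and substituting into `F₆` gives one more relation `C z x₁ = (D x₁ + ζˢ) zˢ`, which
after substituting the three affine expressions is the quadratic in `x₁`.
-/

namespace HostPathogen

variable {α αs β₁ β₂ μ γs γ₁ γ₂ κ₁ κ₂ ν νs ζs ζ : ℝ} {x₁ x₂ ys y₁ y₂ zs z : ℝ}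

theorem alpha_mul_z_eq (hx₂ : x₂ ≠ 0)
    (h2 : x₂ * (β₁ - β₂ * (x₁ + x₂)) - α * x₂ * z = 0) :
    α * z = β₁ - β₂ * (x₁ + x₂) := by
  have h : x₂ * (β₁ - β₂ * (x₁ + x₂) - α * z) = 0 := by linear_combination h2
  linear_combination -(mul_eq_zero.mp h).resolve_left hx₂

theorem alphaS_mul_zS_eq (hx₁ : x₁ ≠ 0)
    (h1 : x₁ * (1 - x₁ - x₂) - α * x₁ * z - αs * x₁ * zs = 0)
    (hz : α * z = β₁ - β₂ * (x₁ + x₂)) :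
    αs * zs = 1 - β₁ + (β₂ - 1) * (x₁ + x₂) := by
  have h : x₁ * (1 - x₁ - x₂ - α * z - αs * zs) = 0 := by linear_combination h1
  linear_combination -(mul_eq_zero.mp h).resolve_left hx₁ - hz

theorem y₁_eq (hμγ : μ + γ₁ ≠ 0) (h4 : α * z * x₁ - (μ + γ₁) * y₁ = 0) :
    y₁ = α * z * x₁ / (μ + γ₁) := by
  rw [eq_div_iff hμγ]; linear_combination -h4

theorem A_mul_x₁_add_B_mul_x₂_eq (hμγ : μ + γ₁ ≠ 0) (hγ₂ : γ₂ ≠ 0) (hz : z ≠ 0)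
    (h4 : α * z * x₁ - (μ + γ₁) * y₁ = 0)
    (h5 : α * z * x₂ - γ₂ * y₂ = 0)
    (h7 : κ₁ * γ₁ * y₁ + κ₂ * γ₂ * y₂ - ν * α * z * (x₁ + x₂) - ζ * z = 0) :
    α * (γ₁ * κ₁ / (μ + γ₁) - ν) * x₁ + α * (κ₂ - ν) * x₂ = ζ := by
  have hy₂ : y₂ = α * z * x₂ / γ₂ := by
    rw [eq_div_iff hγ₂]; linear_combination -h5
  have h : z * (α * (γ₁ * κ₁ / (μ + γ₁) - ν) * x₁ + α * (κ₂ - ν) * x₂ - ζ) = 0 := by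
    rw [y₁_eq hμγ h4, hy₂] at h7
    field_simp at h7 ⊢
    linear_combination h7
  linear_combination (mul_eq_zero.mp h).resolve_left hz

theorem C_mul_z_mul_x₁_eq (hμγ : μ + γ₁ ≠ 0)
    (h3 : αs * zs * x₁ + μ * y₁ - γs * ys = 0)
    (h4 : α * z * x₁ - (μ + γ₁) * y₁ = 0)
    (h6 : γs * ys - νs * αs * zs * x₁ - ζs * zs = 0) :
    α * μ / (μ + γ₁) * z * x₁ = αs * (νs - 1) * zs * x₁ + ζs * zs := by
  rw [y₁_eq hμγ h4] at h3
  field_simp at h3 ⊢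
  linear_combination h3 + (μ + γ₁) * h6

theorem quadratic_of_affine_relations {A B C D : ℝ}
    (hz : α * z = β₁ - β₂ * (x₁ + x₂))
    (hzs : αs * zs = 1 - β₁ + (β₂ - 1) * (x₁ + x₂))
    (hx₂ : A * x₁ + B * x₂ = ζ)
    (hs : C * z * x₁ = D * zs * x₁ + ζs * zs) :
    (A - B) * ((D * α + C * αs) * β₂ - D * α) * x₁ ^ 2
      + ((A - B) * α * ζs * (β₂ - 1) + (D * α + C * αs) * (B * β₁ - ζ * β₂)
        + D * α * (ζ - B)) * x₁
      + α * ζs * ((1 - β₂) * ζ + B * (β₁ - 1)) = 0 := by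
  linear_combination (α * αs * B) * hs - (C * αs * B * x₁) * hz +
    ((D * α * x₁ + ζs * α) * B) * hzs +
    (C * αs * x₁ * β₂ + (D * α * x₁ + ζs * α) * (β₂ - 1)) * hx₂

end HostPathogen

open HostPathogen in
theorem coexistence_equilibrium_satisfies_quadratic_general
    (α αs β₁ β₂ μ γs γ₁ γ₂ κ₁ κ₂ ν νs ζs ζ : ℝ)
    (hα : 0 < α) (hαs : 0 < αs)
    (hμ : 0 < μ) (hγ₁ : 0 < γ₁) (hγ₂ : 0 < γ₂)
    (hκν : κ₂ ≠ ν)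
    (A : ℝ) (hA : A = α * (γ₁ * κ₁ / (μ + γ₁) - ν))
    (B : ℝ) (hB : B = α * (κ₂ - ν))
    (C : ℝ) (hC : C = α * μ / (μ + γ₁))
    (D : ℝ) (hD : D = αs * (νs - 1))
    (φ₂ φ₁ φ₀ : ℝ)
    (hφ₂ : φ₂ = (A - B) * ((D * α + C * αs) * β₂ - D * α))
    (hφ₁ : φ₁ = (A - B) * α * ζs * (β₂ - 1) + (D * α + C * αs) * (B * β₁ - ζ * β₂) + D * α * (ζ - B))
    (hφ₀ : φ₀ = α * ζs * ((1 - β₂) * ζ + B * (β₁ - 1)))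
    (x₁ x₂ ys y₁ y₂ zs z : ℝ)
    (h1 : x₁ * (1 - x₁ - x₂) - α * x₁ * z - αs * x₁ * zs = 0)
    (h2 : x₂ * (β₁ - β₂ * (x₁ + x₂)) - α * x₂ * z = 0)
    (h3 : αs * zs * x₁ + μ * y₁ - γs * ys = 0)
    (h4 : α * z * x₁ - (μ + γ₁) * y₁ = 0)
    (h5 : α * z * x₂ - γ₂ * y₂ = 0)
    (h6 : γs * ys - νs * αs * zs * x₁ - ζs * zs = 0)
    (h7 : κ₁ * γ₁ * y₁ + κ₂ * γ₂ * y₂ - ν * α * z * (x₁ + x₂) - ζ * z = 0)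
    (hx₁ : x₁ ≠ 0) (hx₂ : x₂ ≠ 0) (hz : z ≠ 0) :
    x₂ = (ζ - A * x₁) / B ∧
    z = (β₁ - β₂ * (x₁ + x₂)) / α ∧
    zs = (1 - β₁ + (β₂ - 1) * (x₁ + x₂)) / αs ∧
    φ₂ * x₁ ^ 2 + φ₁ * x₁ + φ₀ = 0 := by
  have hμγ : μ + γ₁ ≠ 0 := by positivity
  have hB0 : B ≠ 0 := hB ▸ mul_ne_zero hα.ne' (sub_ne_zero.mpr hκν)
  have hαz := alpha_mul_z_eq hx₂ h2
  have hαzs := alphaS_mul_zS_eq hx₁ h1 hαz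
  have hlin : A * x₁ + B * x₂ = ζ := hA ▸ hB ▸ A_mul_x₁_add_B_mul_x₂_eq hμγ hγ₂.ne' hz h4 h5 h7
  have hCD : C * z * x₁ = D * zs * x₁ + ζs * zs := hC ▸ hD ▸ C_mul_z_mul_x₁_eq hμγ h3 h4 h6
  refine ⟨?_, ?_, ?_, ?_⟩
  · rw [eq_div_iff hB0]; linear_combination hlin
  · rw [eq_div_iff hα.ne']; linear_combination hαz
  · rw [eq_div_iff hαs.ne']; linear_combination hαzs
  · rw [hφ₂, hφ₁, hφ₀]
    exact quadratic_of_affine_relations hαz hαzs hlin hCD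

theorem coexistence_equilibrium_satisfies_quadratic
    (α αs β₁ β₂ μ γs γ₁ γ₂ κ₁ κ₂ ν νs ζs ζ : ℝ)
    (hα : 0 < α) (hαs : 0 < αs) (hβ₁pos : 0 < β₁) (hβ₂pos : 0 < β₂)
    (hμ : 0 < μ) (hγs : 0 < γs) (hγ₁ : 0 < γ₁) (hγ₂ : 0 < γ₂)
    (hκ₁ : 0 < κ₁) (hκ₂ : 0 < κ₂) (hν : 0 < ν) (hνs : 0 < νs)
    (hζs : 0 < ζs) (hζ : 0 < ζ)
    (hκν : κ₂ ≠ ν)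
    (A : ℝ) (hA : A = α * (γ₁ * κ₁ / (μ + γ₁) - ν))
    (B : ℝ) (hB : B = α * (κ₂ - ν))
    (C : ℝ) (hC : C = α * μ / (μ + γ₁))
    (D : ℝ) (hD : D = αs * (νs - 1))
    (φ₂ φ₁ φ₀ : ℝ)
    (hφ₂ : φ₂ = (A - B) * ((D * α + C * αs) * β₂ - D * α))
    (hφ₁ : φ₁ = (A - B) * α * ζs * (β₂ - 1) + (D * α + C * αs) * (B * β₁ - ζ * β₂) + D * α * (ζ - B))
    (hφ₀ : φ₀ = α * ζs * ((1 - β₂) * ζ + B * (β₁ - 1)))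
    (x₁ x₂ ys y₁ y₂ zs z : ℝ)
    (h1 : x₁ * (1 - x₁ - x₂) - α * x₁ * z - αs * x₁ * zs = 0)
    (h2 : x₂ * (β₁ - β₂ * (x₁ + x₂)) - α * x₂ * z = 0)
    (h3 : αs * zs * x₁ + μ * y₁ - γs * ys = 0)
    (h4 : α * z * x₁ - (μ + γ₁) * y₁ = 0)
    (h5 : α * z * x₂ - γ₂ * y₂ = 0)
    (h6 : γs * ys - νs * αs * zs * x₁ - ζs * zs = 0)
    (h7 : κ₁ * γ₁ * y₁ + κ₂ * γ₂ * y₂ - ν * α * z * (x₁ + x₂) - ζ * z = 0)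
    (hx₁ : x₁ ≠ 0) (hx₂ : x₂ ≠ 0) (hz : z ≠ 0) :
    x₂ = (ζ - A * x₁) / B ∧
    z = (β₁ - β₂ * (x₁ + x₂)) / α ∧
    zs = (1 - β₁ + (β₂ - 1) * (x₁ + x₂)) / αs ∧
    φ₂ * x₁ ^ 2 + φ₁ * x₁ + φ₀ = 0 :=
  coexistence_equilibrium_satisfies_quadratic_general α αs β₁ β₂ μ γs γ₁ γ₂ κ₁ κ₂ ν νs ζs ζ hα hαs
    hμ hγ₁ hγ₂ hκν A hA B hB C hC D hD φ₂ φ₁ φ₀ hφ₂ hφ₁ hφ₀ x₁ x₂ ys y₁ y₂ zs z h1 h2 h3 h4 h5 h6 h7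
    hx₁ hx₂ hz
end

section
/- The characteristic polynomial of the Jacobian matrix DF(v₀) of F at the trivial equilibrium v₀ = (0,0,0,0,0,0,0) factors completely over ℝ as (X − 1)(X − β₁)(X + γˢ)(X + γ₁ + μ)(X + γ₂)(X + ζˢ)(X + ζ). In particular, for all strictly positive parameter values, DF(v₀) has the eigenvalue 1 > 0 and the eigenvalue −ζ < 0, so the origin is a saddle (neither all eigenvalues have negative real part nor all positive real part). -/
open Polynomial in
noncomputable def jacobianMatrix (F : (Fin 7 → ℝ) → (Fin 7 → ℝ)) (p : Fin 7 → ℝ) :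
    Matrix (Fin 7) (Fin 7) ℝ :=
  Matrix.of fun i j => fderiv ℝ (fun v => F v i) p (Pi.single j 1)

noncomputable def prj (j : Fin 7) : (Fin 7 → ℝ) →L[ℝ] ℝ := ContinuousLinearMap.proj j

lemma hprj (j : Fin 7) (p : Fin 7 → ℝ) : HasFDerivAt (fun v : Fin 7 → ℝ => v j) (prj j) p :=
  (ContinuousLinearMap.proj j : (Fin 7 → ℝ) →L[ℝ] ℝ).hasFDerivAt

/-- The Jacobian matrix at the origin. -/
noncomputable def Mjac (β₁ μ γs γ₁ γ₂ κ₁ κ₂ ζs ζ : ℝ) : Matrix (Fin 7) (Fin 7) ℝ :=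
  Matrix.of
    ![![(1:ℝ),0,0,0,0,0,0], ![0,β₁,0,0,0,0,0], ![0,0,-γs,μ,0,0,0],
      ![0,0,0,-(μ+γ₁),0,0,0], ![0,0,0,0,-γ₂,0,0], ![0,0,γs,0,0,-ζs,0],
      ![0,0,0,κ₁*γ₁,κ₂*γ₂,0,-ζ]]

/-- An upper-triangular rearrangement of `Mjac`. -/
noncomputable def Njac (β₁ μ γs γ₁ γ₂ κ₁ κ₂ ζs ζ : ℝ) : Matrix (Fin 7) (Fin 7) ℝ :=
  Matrix.of
    ![![(1:ℝ),0,0,0,0,0,0], ![0,β₁,0,0,0,0,0], ![0,0,-ζ,0,0,κ₁*γ₁,κ₂*γ₂],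
      ![0,0,0,-ζs,γs,0,0], ![0,0,0,0,-γs,μ,0], ![0,0,0,0,0,-(μ+γ₁),0],
      ![0,0,0,0,0,0,-γ₂]]

def ejac : Fin 7 ≃ Fin 7 where
  toFun := ![0,1,4,5,6,3,2]
  invFun := ![0,1,6,5,2,3,4]
  left_inv := by decide
  right_inv := by decide

lemma pval : ∀ j : Fin 7, (![0,0,0,0,0,0,0] : Fin 7 → ℝ) j = 0 := by
  intro j; fin_cases j <;> rfl

open Polynomial in
lemma Mjac_charpoly (β₁ μ γs γ₁ γ₂ κ₁ κ₂ ζs ζ : ℝ) :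
    (Mjac β₁ μ γs γ₁ γ₂ κ₁ κ₂ ζs ζ).charpoly =
      (X - C 1) * (X - C β₁) * (X + C γs) * (X + C (γ₁ + μ)) *
        (X + C γ₂) * (X + C ζs) * (X + C ζ) := by
  have hN : (Matrix.reindex ejac ejac (Mjac β₁ μ γs γ₁ γ₂ κ₁ κ₂ ζs ζ)).BlockTriangular id := by
    intro i j h
    fin_cases i <;> fin_cases j <;> first | exact absurd h (by decide) | rfl
  have d0 : Matrix.reindex ejac ejac (Mjac β₁ μ γs γ₁ γ₂ κ₁ κ₂ ζs ζ) 0 0 = 1 := rfl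
  have d1 : Matrix.reindex ejac ejac (Mjac β₁ μ γs γ₁ γ₂ κ₁ κ₂ ζs ζ) 1 1 = β₁ := rfl
  have d2 : Matrix.reindex ejac ejac (Mjac β₁ μ γs γ₁ γ₂ κ₁ κ₂ ζs ζ) 2 2 = -ζ := rfl
  have d3 : Matrix.reindex ejac ejac (Mjac β₁ μ γs γ₁ γ₂ κ₁ κ₂ ζs ζ) 3 3 = -ζs := rfl
  have d4 : Matrix.reindex ejac ejac (Mjac β₁ μ γs γ₁ γ₂ κ₁ κ₂ ζs ζ) 4 4 = -γs := rfl
  have d5 : Matrix.reindex ejac ejac (Mjac β₁ μ γs γ₁ γ₂ κ₁ κ₂ ζs ζ) 5 5 = -(μ + γ₁) := rfl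
  have d6 : Matrix.reindex ejac ejac (Mjac β₁ μ γs γ₁ γ₂ κ₁ κ₂ ζs ζ) 6 6 = -γ₂ := rfl
  rw [← Matrix.charpoly_reindex ejac, Matrix.charpoly_of_upperTriangular _ hN,
    Fin.prod_univ_seven, d0, d1, d2, d3, d4, d5, d6]
  simp only [map_neg, map_add, sub_neg_eq_add]
  ring

set_option maxHeartbeats 4000000 in
open Polynomial in
theorem charpoly_at_trivial_equilibrium
    (α αs β₁ β₂ μ γs γ₁ γ₂ κ₁ κ₂ ν νs ζs ζ : ℝ)
    (hα : 0 < α) (hαs : 0 < αs) (hβ₁pos : 0 < β₁) (hβ₂pos : 0 < β₂)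
    (hμ : 0 < μ) (hγs : 0 < γs) (hγ₁ : 0 < γ₁) (hγ₂ : 0 < γ₂)
    (hκ₁ : 0 < κ₁) (hκ₂ : 0 < κ₂) (hν : 0 < ν) (hνs : 0 < νs)
    (hζs : 0 < ζs) (hζ : 0 < ζ)
    (F : (Fin 7 → ℝ) → (Fin 7 → ℝ))
    (hF : ∀ v : Fin 7 → ℝ, F v = ![
      v 0 * (1 - v 0 - v 1) - α * v 0 * v 6 - αs * v 0 * v 5,
      v 1 * (β₁ - β₂ * (v 0 + v 1)) - α * v 1 * v 6,
      αs * v 5 * v 0 + μ * v 3 - γs * v 2,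
      α * v 6 * v 0 - (μ + γ₁) * v 3,
      α * v 6 * v 1 - γ₂ * v 4,
      γs * v 2 - νs * αs * v 5 * v 0 - ζs * v 5,
      κ₁ * γ₁ * v 3 + κ₂ * γ₂ * v 4 - ν * α * v 6 * (v 0 + v 1) - ζ * v 6]) :
    (jacobianMatrix F ![0, 0, 0, 0, 0, 0, 0]).charpoly =
      (X - C 1) * (X - C β₁) * (X + C γs) * (X + C (γ₁ + μ)) *
        (X + C γ₂) * (X + C ζs) * (X + C ζ) ∧
    ((jacobianMatrix F ![0, 0, 0, 0, 0, 0, 0]).charpoly.IsRoot 1 ∧ (0 : ℝ) < 1) ∧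
    ((jacobianMatrix F ![0, 0, 0, 0, 0, 0, 0]).charpoly.IsRoot (-ζ) ∧ -ζ < 0) ∧
    ¬ (∀ lam : ℂ,
        (((jacobianMatrix F ![0, 0, 0, 0, 0, 0, 0]).map Complex.ofReal).charpoly).IsRoot lam →
          lam.re < 0) ∧
    ¬ (∀ lam : ℂ,
        (((jacobianMatrix F ![0, 0, 0, 0, 0, 0, 0]).map Complex.ofReal).charpoly).IsRoot lam →
          0 < lam.re) := by
  have e0 : (fun v : Fin 7 → ℝ => F v 0) =
      (fun v : Fin 7 → ℝ => v 0 * (1 - v 0 - v 1) - α * v 0 * v 6 - αs * v 0 * v 5) := by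
    funext v; rw [hF]; rfl
  have e1 : (fun v : Fin 7 → ℝ => F v 1) =
      (fun v : Fin 7 → ℝ => v 1 * (β₁ - β₂ * (v 0 + v 1)) - α * v 1 * v 6) := by
    funext v; rw [hF]; rfl
  have e2 : (fun v : Fin 7 → ℝ => F v 2) =
      (fun v : Fin 7 → ℝ => αs * v 5 * v 0 + μ * v 3 - γs * v 2) := by
    funext v; rw [hF]; rfl
  have e3 : (fun v : Fin 7 → ℝ => F v 3) =
      (fun v : Fin 7 → ℝ => α * v 6 * v 0 - (μ + γ₁) * v 3) := by
    funext v; rw [hF]; rfl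
  have e4 : (fun v : Fin 7 → ℝ => F v 4) =
      (fun v : Fin 7 → ℝ => α * v 6 * v 1 - γ₂ * v 4) := by
    funext v; rw [hF]; rfl
  have e5 : (fun v : Fin 7 → ℝ => F v 5) =
      (fun v : Fin 7 → ℝ => γs * v 2 - νs * αs * v 5 * v 0 - ζs * v 5) := by
    funext v; rw [hF]; rfl
  have e6 : (fun v : Fin 7 → ℝ => F v 6) =
      (fun v : Fin 7 → ℝ =>
        κ₁ * γ₁ * v 3 + κ₂ * γ₂ * v 4 - ν * α * v 6 * (v 0 + v 1) - ζ * v 6) := by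
    funext v; rw [hF]; rfl
  have hd0 := (((hprj 0 ![0,0,0,0,0,0,0]).mul
      (((hasFDerivAt_const (1:ℝ) _).sub (hprj 0 _)).sub (hprj 1 _))).sub
      (((hasFDerivAt_const α _).mul (hprj 0 _)).mul (hprj 6 _))).sub
      (((hasFDerivAt_const αs _).mul (hprj 0 _)).mul (hprj 5 _))
  have hd1 := ((hprj 1 ![0,0,0,0,0,0,0]).mul ((hasFDerivAt_const β₁ _).sub
      ((hasFDerivAt_const β₂ _).mul ((hprj 0 _).add (hprj 1 _))))).sub
      (((hasFDerivAt_const α _).mul (hprj 1 _)).mul (hprj 6 _))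
  have hd2 := ((((hasFDerivAt_const αs (![0,0,0,0,0,0,0] : Fin 7 → ℝ)).mul (hprj 5 _)).mul
      (hprj 0 _)).add
      ((hasFDerivAt_const μ _).mul (hprj 3 _))).sub ((hasFDerivAt_const γs _).mul (hprj 2 _))
  have hd3 := (((hasFDerivAt_const α (![0,0,0,0,0,0,0] : Fin 7 → ℝ)).mul (hprj 6 _)).mul
      (hprj 0 _)).sub ((hasFDerivAt_const (μ + γ₁) _).mul (hprj 3 _))
  have hd4 := (((hasFDerivAt_const α (![0,0,0,0,0,0,0] : Fin 7 → ℝ)).mul (hprj 6 _)).mul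
      (hprj 1 _)).sub ((hasFDerivAt_const γ₂ _).mul (hprj 4 _))
  have hd5 := (((hasFDerivAt_const γs (![0,0,0,0,0,0,0] : Fin 7 → ℝ)).mul (hprj 2 _)).sub
      ((((hasFDerivAt_const νs _).mul (hasFDerivAt_const αs _)).mul (hprj 5 _)).mul
        (hprj 0 _))).sub ((hasFDerivAt_const ζs _).mul (hprj 5 _))
  have hd6 := (((((hasFDerivAt_const κ₁ (![0,0,0,0,0,0,0] : Fin 7 → ℝ)).mul
      (hasFDerivAt_const γ₁ _)).mul (hprj 3 _)).add
      (((hasFDerivAt_const κ₂ _).mul (hasFDerivAt_const γ₂ _)).mul (hprj 4 _))).sub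
      ((((hasFDerivAt_const ν _).mul (hasFDerivAt_const α _)).mul (hprj 6 _)).mul
        ((hprj 0 _).add (hprj 1 _)))).sub ((hasFDerivAt_const ζ _).mul (hprj 6 _))
  have hJ : jacobianMatrix F ![0, 0, 0, 0, 0, 0, 0] = Mjac β₁ μ γs γ₁ γ₂ κ₁ κ₂ ζs ζ := by
    ext i j
    simp only [jacobianMatrix, Matrix.of_apply]
    fin_cases i
    · show fderiv ℝ (fun v => F v 0) ![0,0,0,0,0,0,0] (Pi.single j 1) = Mjac β₁ μ γs γ₁ γ₂ κ₁ κ₂ ζs ζ 0 j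
      rw [e0]; erw [hd0.fderiv]
      fin_cases j <;> (simp [pval, prj, ContinuousLinearMap.proj_apply, Pi.single_apply, Mjac]; try rfl)
    · show fderiv ℝ (fun v => F v 1) ![0,0,0,0,0,0,0] (Pi.single j 1) = Mjac β₁ μ γs γ₁ γ₂ κ₁ κ₂ ζs ζ 1 j
      rw [e1]; erw [hd1.fderiv]
      fin_cases j <;> (simp [pval, prj, ContinuousLinearMap.proj_apply, Pi.single_apply, Mjac]; try rfl)
    · show fderiv ℝ (fun v => F v 2) ![0,0,0,0,0,0,0] (Pi.single j 1) = Mjac β₁ μ γs γ₁ γ₂ κ₁ κ₂ ζs ζ 2 j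
      rw [e2]; erw [hd2.fderiv]
      fin_cases j <;> (simp [pval, prj, ContinuousLinearMap.proj_apply, Pi.single_apply, Mjac]; try rfl)
    · show fderiv ℝ (fun v => F v 3) ![0,0,0,0,0,0,0] (Pi.single j 1) = Mjac β₁ μ γs γ₁ γ₂ κ₁ κ₂ ζs ζ 3 j
      rw [e3]; erw [hd3.fderiv]
      fin_cases j <;> (simp [pval, prj, ContinuousLinearMap.proj_apply, Pi.single_apply, Mjac]; try rfl)
    · show fderiv ℝ (fun v => F v 4) ![0,0,0,0,0,0,0] (Pi.single j 1) = Mjac β₁ μ γs γ₁ γ₂ κ₁ κ₂ ζs ζ 4 j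
      rw [e4]; erw [hd4.fderiv]
      fin_cases j <;> (simp [pval, prj, ContinuousLinearMap.proj_apply, Pi.single_apply, Mjac]; try rfl)
    · show fderiv ℝ (fun v => F v 5) ![0,0,0,0,0,0,0] (Pi.single j 1) = Mjac β₁ μ γs γ₁ γ₂ κ₁ κ₂ ζs ζ 5 j
      rw [e5]; erw [hd5.fderiv]
      fin_cases j <;> (simp [pval, prj, ContinuousLinearMap.proj_apply, Pi.single_apply, Mjac]; try rfl)
    · show fderiv ℝ (fun v => F v 6) ![0,0,0,0,0,0,0] (Pi.single j 1) = Mjac β₁ μ γs γ₁ γ₂ κ₁ κ₂ ζs ζ 6 j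
      rw [e6]; erw [hd6.fderiv]
      fin_cases j <;> (simp [pval, prj, ContinuousLinearMap.proj_apply, Pi.single_apply, Mjac]; try rfl)
  have hC : (jacobianMatrix F ![0, 0, 0, 0, 0, 0, 0]).charpoly =
      (X - C 1) * (X - C β₁) * (X + C γs) * (X + C (γ₁ + μ)) *
        (X + C γ₂) * (X + C ζs) * (X + C ζ) := by
    rw [hJ]; exact Mjac_charpoly β₁ μ γs γ₁ γ₂ κ₁ κ₂ ζs ζ
  have hroot1 : (jacobianMatrix F ![0, 0, 0, 0, 0, 0, 0]).charpoly.IsRoot 1 := by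
    rw [hC]; simp [IsRoot]
  have hrootz : (jacobianMatrix F ![0, 0, 0, 0, 0, 0, 0]).charpoly.IsRoot (-ζ) := by
    rw [hC]; simp [IsRoot]
  have hmap : ((jacobianMatrix F ![0, 0, 0, 0, 0, 0, 0]).map Complex.ofReal).charpoly =
      ((jacobianMatrix F ![0, 0, 0, 0, 0, 0, 0]).charpoly).map Complex.ofRealHom :=
    Matrix.charpoly_map _ Complex.ofRealHom
  have hroot1C : (((jacobianMatrix F ![0, 0, 0, 0, 0, 0, 0]).map
      Complex.ofReal).charpoly).IsRoot 1 := by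
    rw [hmap]
    simpa using hroot1.map (f := Complex.ofRealHom)
  have hrootzC : (((jacobianMatrix F ![0, 0, 0, 0, 0, 0, 0]).map
      Complex.ofReal).charpoly).IsRoot (-ζ : ℝ) := by
    rw [hmap]
    simpa using hrootz.map (f := Complex.ofRealHom)
  refine ⟨hC, ⟨hroot1, one_pos⟩, ⟨hrootz, neg_neg_of_pos hζ⟩, ?_, ?_⟩
  · intro h
    have h1 := h 1 hroot1C
    rw [Complex.one_re] at h1
    linarith
  · intro h
    have h2 := h (Complex.ofReal (-ζ)) hrootzC
    rw [Complex.ofReal_re] at h2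
    linarith
end

section
/- The characteristic polynomial of the Jacobian matrix DF(v₁) of F at the virus-free equilibrium v₁ = (1,0,0,0,0,0,0) factors over ℝ as (X + 1)(X + γ₂)(X − (β₁ − β₂))·Q₁(X)·Q₂(X), where Q₁(X) = X² + (αν + γ₁ + μ + ζ)X − ((κ₁ − ν)γ₁ − μν)α + ζ(γ₁ + μ) and Q₂(X) = X² + (αˢνˢ + γˢ + ζˢ)X + (αˢ(νˢ − 1) + ζˢ)γˢ. -/
/-!
At the virus-free equilibrium only `x₁ = 1` is nonzero, so each infection term linearises to a
single entry and the Jacobian is block upper triangular for the ordered partition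
`{x₁}, {x₂}, {yˢ, zˢ}, {y₁, z}, {y₂}` of the variables: each group only influences groups listed
before it. The characteristic polynomial is therefore the product of those of the diagonal
blocks: three linear factors, `Q₂` from `(yˢ, zˢ)` and `Q₁` from `(y₁, z)`.
-/

open Polynomial

namespace Matrix

variable {n β R : Type*} [Fintype n] [DecidableEq n] [DecidableEq β] [CommRing R]
  (M : Matrix n n R) {b : n → β} {k : β}

theorem charpoly_toSquareBlock_of_singleton {i : n} (h : ∀ l, b l = k ↔ l = i) :
    (M.toSquareBlock b k).charpoly = X - C (M i i) := by
  let _ : Unique {l // b l = k} :=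
    { default := ⟨i, (h i).2 rfl⟩
      uniq := fun l => Subtype.ext ((h l).1 l.2) }
  unfold charpoly
  rw [det_unique, charmatrix_apply_eq]
  rfl

theorem charpoly_toSquareBlock_of_pair [Nontrivial R] {i j : n} (hij : i ≠ j)
    (h : ∀ l, b l = k ↔ l = i ∨ l = j) :
    (M.toSquareBlock b k).charpoly =
      X ^ 2 - C (M i i + M j j) * X + C (M i i * M j j - M i j * M j i) := by
  let e : Fin 2 ≃ {l // b l = k} :=
    { toFun := ![⟨i, (h i).2 (.inl rfl)⟩, ⟨j, (h j).2 (.inr rfl)⟩]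
      invFun := fun l => if l.1 = i then 0 else 1
      left_inv := fun t => by fin_cases t <;> simp [hij.symm]
      right_inv := fun ⟨l, hl⟩ => by
        rcases (h l).1 hl with rfl | rfl <;> simp [hij.symm] }
  rw [← charpoly_reindex e.symm, charpoly_fin_two, trace_fin_two, det_fin_two]
  rfl

end Matrix

theorem jacobianMatrix_apply (F : (Fin 7 → ℝ) → (Fin 7 → ℝ)) (p : Fin 7 → ℝ) (i j : Fin 7) :
    jacobianMatrix F p i j = fderiv ℝ (fun v => F v i) p (Pi.single j 1) :=
  rfl

section VirusFree

variable (α αs β₁ β₂ μ γs γ₁ γ₂ κ₁ κ₂ ν νs ζs ζ : ℝ)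

/-- Variables are ordered `(x₁, x₂, yˢ, y₁, y₂, zˢ, z)`. -/
def virusFreeJacobian : Matrix (Fin 7) (Fin 7) ℝ :=
  !![-1, -1, 0, 0, 0, -αs, -α;
     0, β₁ - β₂, 0, 0, 0, 0, 0;
     0, 0, -γs, μ, 0, αs, 0;
     0, 0, 0, -(μ + γ₁), 0, 0, α;
     0, 0, 0, 0, -γ₂, 0, 0;
     0, 0, γs, 0, 0, -(νs * αs + ζs), 0;
     0, 0, 0, κ₁ * γ₁, κ₂ * γ₂, 0, -(ν * α + ζ)]

theorem jacobianMatrix_eq_virusFreeJacobian {F : (Fin 7 → ℝ) → (Fin 7 → ℝ)}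
    (hF : ∀ v : Fin 7 → ℝ, F v = ![
      v 0 * (1 - v 0 - v 1) - α * v 0 * v 6 - αs * v 0 * v 5,
      v 1 * (β₁ - β₂ * (v 0 + v 1)) - α * v 1 * v 6,
      αs * v 5 * v 0 + μ * v 3 - γs * v 2,
      α * v 6 * v 0 - (μ + γ₁) * v 3,
      α * v 6 * v 1 - γ₂ * v 4,
      γs * v 2 - νs * αs * v 5 * v 0 - ζs * v 5,
      κ₁ * γ₁ * v 3 + κ₂ * γ₂ * v 4 - ν * α * v 6 * (v 0 + v 1) - ζ * v 6]) :
    jacobianMatrix F ![1, 0, 0, 0, 0, 0, 0] =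
      virusFreeJacobian α αs β₁ β₂ μ γs γ₁ γ₂ κ₁ κ₂ ν νs ζs ζ := by
  ext i j
  fin_cases i <;>
    simp only [virusFreeJacobian, jacobianMatrix_apply, hF, Fin.reduceFinMk, Matrix.of_apply,
      Matrix.cons_val] <;>
    simp (disch := fun_prop) only [fderiv_fun_add, fderiv_fun_sub, fderiv_fun_mul, fderiv_fun_id,
      fderiv_apply] <;>
    fin_cases j <;> simp <;> ring

/-- The diagonal blocks `{x₁}, {x₂}, {yˢ, zˢ}, {y₁, z}, {y₂}` get the labels `0, …, 4`. -/
def virusFreeBlock : Fin 7 → ℕ := ![0, 1, 2, 3, 4, 2, 3]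

theorem virusFreeJacobian_blockTriangular :
    (virusFreeJacobian α αs β₁ β₂ μ γs γ₁ γ₂ κ₁ κ₂ ν νs ζs ζ).BlockTriangular virusFreeBlock := by
  intro i j hij
  fin_cases i <;> fin_cases j <;> simp_all [virusFreeBlock, virusFreeJacobian]

theorem charpoly_virusFreeJacobian :
    (virusFreeJacobian α αs β₁ β₂ μ γs γ₁ γ₂ κ₁ κ₂ ν νs ζs ζ).charpoly =
      (X + C 1) * (X + C γ₂) * (X - C (β₁ - β₂)) *
        (X ^ 2 + C (α * ν + γ₁ + μ + ζ) * X +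
          C (-(((κ₁ - ν) * γ₁ - μ * ν) * α) + ζ * (γ₁ + μ))) *
        (X ^ 2 + C (αs * νs + γs + ζs) * X + C ((αs * (νs - 1) + ζs) * γs)) := by
  have hblocks : Finset.univ.image virusFreeBlock = Finset.range 5 := by decide
  rw [(virusFreeJacobian_blockTriangular ..).charpoly, hblocks]
  simp only [Finset.prod_range_succ, Finset.prod_range_zero, one_mul]
  rw [Matrix.charpoly_toSquareBlock_of_singleton _ (i := 0) (by decide),
    Matrix.charpoly_toSquareBlock_of_singleton _ (i := 1) (by decide),
    Matrix.charpoly_toSquareBlock_of_pair _ (i := 2) (j := 5) (by decide) (by decide),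
    Matrix.charpoly_toSquareBlock_of_pair _ (i := 3) (j := 6) (by decide) (by decide),
    Matrix.charpoly_toSquareBlock_of_singleton _ (i := 4) (by decide)]
  simp only [virusFreeJacobian, Matrix.of_apply, Matrix.cons_val, C_add, C_sub, C_mul, C_neg, C_1]
  ring

end VirusFree

open Polynomial in
theorem charpoly_at_virus_free_1_general
    (α αs β₁ β₂ μ γs γ₁ γ₂ κ₁ κ₂ ν νs ζs ζ : ℝ)
    (F : (Fin 7 → ℝ) → (Fin 7 → ℝ))
    (hF : ∀ v : Fin 7 → ℝ, F v = ![
      v 0 * (1 - v 0 - v 1) - α * v 0 * v 6 - αs * v 0 * v 5,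
      v 1 * (β₁ - β₂ * (v 0 + v 1)) - α * v 1 * v 6,
      αs * v 5 * v 0 + μ * v 3 - γs * v 2,
      α * v 6 * v 0 - (μ + γ₁) * v 3,
      α * v 6 * v 1 - γ₂ * v 4,
      γs * v 2 - νs * αs * v 5 * v 0 - ζs * v 5,
      κ₁ * γ₁ * v 3 + κ₂ * γ₂ * v 4 - ν * α * v 6 * (v 0 + v 1) - ζ * v 6]) :
    (jacobianMatrix F ![1, 0, 0, 0, 0, 0, 0]).charpoly =
      (X + C 1) * (X + C γ₂) * (X - C (β₁ - β₂)) *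
        (X ^ 2 + C (α * ν + γ₁ + μ + ζ) * X +
          C (-(((κ₁ - ν) * γ₁ - μ * ν) * α) + ζ * (γ₁ + μ))) *
        (X ^ 2 + C (αs * νs + γs + ζs) * X + C ((αs * (νs - 1) + ζs) * γs)) := by
  rw [jacobianMatrix_eq_virusFreeJacobian α αs β₁ β₂ μ γs γ₁ γ₂ κ₁ κ₂ ν νs ζs ζ hF,
    charpoly_virusFreeJacobian]

open Polynomial in
theorem charpoly_at_virus_free_1
    (α αs β₁ β₂ μ γs γ₁ γ₂ κ₁ κ₂ ν νs ζs ζ : ℝ)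
    (hα : 0 < α) (hαs : 0 < αs) (hβ₁pos : 0 < β₁) (hβ₂pos : 0 < β₂)
    (hμ : 0 < μ) (hγs : 0 < γs) (hγ₁ : 0 < γ₁) (hγ₂ : 0 < γ₂)
    (hκ₁ : 0 < κ₁) (hκ₂ : 0 < κ₂) (hν : 0 < ν) (hνs : 0 < νs)
    (hζs : 0 < ζs) (hζ : 0 < ζ)
    (F : (Fin 7 → ℝ) → (Fin 7 → ℝ))
    (hF : ∀ v : Fin 7 → ℝ, F v = ![
      v 0 * (1 - v 0 - v 1) - α * v 0 * v 6 - αs * v 0 * v 5,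
      v 1 * (β₁ - β₂ * (v 0 + v 1)) - α * v 1 * v 6,
      αs * v 5 * v 0 + μ * v 3 - γs * v 2,
      α * v 6 * v 0 - (μ + γ₁) * v 3,
      α * v 6 * v 1 - γ₂ * v 4,
      γs * v 2 - νs * αs * v 5 * v 0 - ζs * v 5,
      κ₁ * γ₁ * v 3 + κ₂ * γ₂ * v 4 - ν * α * v 6 * (v 0 + v 1) - ζ * v 6]) :
    (jacobianMatrix F ![1, 0, 0, 0, 0, 0, 0]).charpoly =
      (X + C 1) * (X + C γ₂) * (X - C (β₁ - β₂)) *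
        (X ^ 2 + C (α * ν + γ₁ + μ + ζ) * X +
          C (-(((κ₁ - ν) * γ₁ - μ * ν) * α) + ζ * (γ₁ + μ))) *
        (X ^ 2 + C (αs * νs + γs + ζs) * X + C ((αs * (νs - 1) + ζs) * γs)) :=
  charpoly_at_virus_free_1_general α αs β₁ β₂ μ γs γ₁ γ₂ κ₁ κ₂ ν νs ζs ζ F hF
end

section
/- Assume νˢ ≠ 1 and suppose the transcritical bifurcation relation T₂₆ holds: αˢ·β₁·(1 − νˢ) = β₂·ζˢ. Then the gen-free-2 equilibrium v₆, with coordinates x₁ = −ζˢ/D, x₂ = β₁/β₂ + ζˢ/D, yˢ = (β₁ − β₂)ζˢ/(Dβ₂γˢ), y₁ = 0, y₂ = 0, zˢ = (β₂ − β₁)/(αˢβ₂), z = 0, coincides with the gen-free-1 equilibrium v₂, whose coordinates are x₁ = −ζˢ/D, x₂ = 0, yˢ = −ζˢ(ζˢ + D)/(D²γˢ), y₁ = 0, y₂ = 0, zˢ = 1/αˢ + ζˢ/(αˢD), z = 0. -/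
/-! The relation `T₂₆` pins down `β₁ = -β₂ ζˢ / D`; after substituting it, `v₆ = v₂` is an
identity of rational functions in the remaining parameters. -/

lemma eq_neg_div_of_transcritical {αs β₁ β₂ νs ζs D : ℝ} (hD : D = αs * (νs - 1)) (hD0 : D ≠ 0)
    (hT : αs * β₁ * (1 - νs) = β₂ * ζs) : β₁ = -(β₂ * ζs) / D := by
  rw [eq_div_iff hD0, hD]
  linear_combination -hT

theorem T₂₆_v₆_coincides_with_v₂_general
    (αs β₁ β₂ γs νs ζs : ℝ)
    (hαs : 0 < αs) (hβ₂pos : 0 < β₂)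
    (hνs1 : νs ≠ 1)
    (D : ℝ) (hD : D = αs * (νs - 1))
    (hT : αs * β₁ * (1 - νs) = β₂ * ζs) :
    ((-ζs / D : ℝ), (β₁ / β₂ + ζs / D : ℝ), ((β₁ - β₂) * ζs / (D * β₂ * γs) : ℝ),
        (0 : ℝ), (0 : ℝ), ((β₂ - β₁) / (αs * β₂) : ℝ), (0 : ℝ)) =
      ((-ζs / D : ℝ), (0 : ℝ), (-(ζs * (ζs + D)) / (D ^ 2 * γs) : ℝ),
        (0 : ℝ), (0 : ℝ), (1 / αs + ζs / (αs * D) : ℝ), (0 : ℝ)) := by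
  have hD0 : D ≠ 0 := hD ▸ mul_ne_zero hαs.ne' (sub_ne_zero.mpr hνs1)
  obtain rfl := eq_neg_div_of_transcritical hD hD0 hT
  simp only [Prod.mk.injEq, true_and, and_true]
  refine ⟨?_, ?_, ?_⟩ <;> field_simp [hαs.ne', hβ₂pos.ne'] <;> ring

theorem T₂₆_v₆_coincides_with_v₂
    (α αs β₁ β₂ μ γs γ₁ γ₂ κ₁ κ₂ ν νs ζs ζ : ℝ)
    (hα : 0 < α) (hαs : 0 < αs) (hβ₁pos : 0 < β₁) (hβ₂pos : 0 < β₂)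
    (hμ : 0 < μ) (hγs : 0 < γs) (hγ₁ : 0 < γ₁) (hγ₂ : 0 < γ₂)
    (hκ₁ : 0 < κ₁) (hκ₂ : 0 < κ₂) (hν : 0 < ν) (hνs : 0 < νs)
    (hζs : 0 < ζs) (hζ : 0 < ζ)
    (hνs1 : νs ≠ 1)
    (D : ℝ) (hD : D = αs * (νs - 1))
    (hT : αs * β₁ * (1 - νs) = β₂ * ζs) :
    ((-ζs / D : ℝ), (β₁ / β₂ + ζs / D : ℝ), ((β₁ - β₂) * ζs / (D * β₂ * γs) : ℝ),
        (0 : ℝ), (0 : ℝ), ((β₂ - β₁) / (αs * β₂) : ℝ), (0 : ℝ)) =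
      ((-ζs / D : ℝ), (0 : ℝ), (-(ζs * (ζs + D)) / (D ^ 2 * γs) : ℝ),
        (0 : ℝ), (0 : ℝ), (1 / αs + ζs / (αs * D) : ℝ), (0 : ℝ)) :=
  T₂₆_v₆_coincides_with_v₂_general αs β₁ β₂ γs νs ζs hαs hβ₂pos hνs1 D hD hT
end

section
/- Assume A ≠ 0, νˢ ≠ 1 (so D ≠ 0), and suppose the transcritical bifurcation relation T₂₃ holds: ζ·D + A·ζˢ = 0 (equivalently ζ/A = −ζˢ/D, which is exactly αˢ = (ζˢ/ζ)·((κ₁ − ν)γ₁ − μν)·α/((γ₁ + μ)(1 − νˢ))). Then the coex-1 equilibrium v₃, with coordinates x₁ = ζ/A, x₂ = 0, zˢ = (1 − x₁)/(αζˢ/(C·x₁) + αˢ + Dα/C), z = (1 − x₁ − αˢ·zˢ)/α, y₁ = (C/μ)·x₁·z, y₂ = 0, yˢ = (x₁/γˢ)·(C·z + αˢ·zˢ), coincides with the gen-free-1 equilibrium v₂, whose coordinates are x₁ = −ζˢ/D, x₂ = 0, yˢ = −ζˢ(ζˢ + D)/(D²γˢ), y₁ = 0, y₂ = 0, zˢ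 = 1/αˢ + ζˢ/(αˢD), z = 0. -/
/-!
The relation T₂₃ says precisely that the two candidate values of x₁ agree, ζ / A = -ζˢ / D.
At x₁ = -ζˢ / D the two α-terms in the denominator of zˢ cancel, so zˢ = (1 - x₁) / αˢ;
this is exactly the value for which z = (1 - x₁ - αˢ zˢ) / α vanishes, hence y₁ = 0 as well,
and yˢ reduces to x₁ (1 - x₁) / γˢ, the gen-free value.
-/

section

variable {K : Type*} [Field K]

theorem div_eq_neg_div_of_mul_add_mul_eq_zero {a b c d : K} (hb : b ≠ 0) (hd : d ≠ 0)
    (h : a * d + b * c = 0) : a / b = -c / d := by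
  rw [div_eq_div_iff hb hd]
  linear_combination h

theorem mul_div_mul_neg_div {a b c d : K} (hc : c ≠ 0) :
    a * c / (b * (-c / d)) = -(d * a / b) := by
  by_cases hd : d = 0
  · simp [hd]
  field_simp

end

theorem T₂₃_v₃_coincides_with_v₂_general
    (α αs μ γs νs ζs ζ : ℝ)
    (hαs : 0 < αs)
    (hζs : 0 < ζs)
    (hνs1 : νs ≠ 1)
    (A : ℝ)
    (C : ℝ)
    (D : ℝ) (hD : D = αs * (νs - 1))
    (hA0 : A ≠ 0)
    (hT : ζ * D + A * ζs = 0)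
    (x₁ x₂ ys y₁ y₂ zs z : ℝ)
    (hx₁ : x₁ = ζ / A) (hx₂ : x₂ = 0)
    (hzs : zs = (1 - x₁) / (α * ζs / (C * x₁) + αs + D * α / C))
    (hz : z = (1 - x₁ - αs * zs) / α)
    (hy₁ : y₁ = (C / μ) * x₁ * z) (hy₂ : y₂ = 0)
    (hys : ys = (x₁ / γs) * (C * z + αs * zs)) :
    (x₁, x₂, ys, y₁, y₂, zs, z) =
      ((-ζs / D : ℝ), (0 : ℝ), (-(ζs * (ζs + D)) / (D ^ 2 * γs) : ℝ),
        (0 : ℝ), (0 : ℝ), (1 / αs + ζs / (αs * D) : ℝ), (0 : ℝ)) := by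
  have hD0 : D ≠ 0 := hD ▸ mul_ne_zero hαs.ne' (sub_ne_zero.mpr hνs1)
  have hx : x₁ = -ζs / D := hx₁ ▸ div_eq_neg_div_of_mul_add_mul_eq_zero hA0 hD0 hT
  have hzs' : zs = (1 - x₁) / αs := by
    rw [hzs, hx, mul_div_mul_neg_div hζs.ne', neg_add_cancel_comm]
  have hz0 : z = 0 := by
    rw [hz, hzs', mul_div_cancel₀ _ hαs.ne', sub_self, zero_div]
  simp only [Prod.mk.injEq]
  refine ⟨hx, hx₂, ?_, by rw [hy₁, hz0, mul_zero], hy₂, ?_, hz0⟩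
  · rw [hys, hz0, hzs', hx]
    field_simp
    ring
  · rw [hzs', hx]
    field_simp
    ring

theorem T₂₃_v₃_coincides_with_v₂
    (α αs β₁ β₂ μ γs γ₁ γ₂ κ₁ κ₂ ν νs ζs ζ : ℝ)
    (hα : 0 < α) (hαs : 0 < αs) (hβ₁pos : 0 < β₁) (hβ₂pos : 0 < β₂)
    (hμ : 0 < μ) (hγs : 0 < γs) (hγ₁ : 0 < γ₁) (hγ₂ : 0 < γ₂)
    (hκ₁ : 0 < κ₁) (hκ₂ : 0 < κ₂) (hν : 0 < ν) (hνs : 0 < νs)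
    (hζs : 0 < ζs) (hζ : 0 < ζ)
    (hνs1 : νs ≠ 1)
    (A : ℝ) (hA : A = α * (γ₁ * κ₁ / (μ + γ₁) - ν))
    (C : ℝ) (hC : C = α * μ / (μ + γ₁))
    (D : ℝ) (hD : D = αs * (νs - 1))
    (hA0 : A ≠ 0)
    (hT : ζ * D + A * ζs = 0)
    (x₁ x₂ ys y₁ y₂ zs z : ℝ)
    (hx₁ : x₁ = ζ / A) (hx₂ : x₂ = 0)
    (hzs : zs = (1 - x₁) / (α * ζs / (C * x₁) + αs + D * α / C))
    (hz : z = (1 - x₁ - αs * zs) / α)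
    (hy₁ : y₁ = (C / μ) * x₁ * z) (hy₂ : y₂ = 0)
    (hys : ys = (x₁ / γs) * (C * z + αs * zs)) :
    (x₁, x₂, ys, y₁, y₂, zs, z) =
      ((-ζs / D : ℝ), (0 : ℝ), (-(ζs * (ζs + D)) / (D ^ 2 * γs) : ℝ),
        (0 : ℝ), (0 : ℝ), (1 / αs + ζs / (αs * D) : ℝ), (0 : ℝ)) :=
  T₂₃_v₃_coincides_with_v₂_general α αs μ γs νs ζs ζ hαs hζs hνs1 A C D hD hA0 hT x₁ x₂ ys y₁ y₂ zs
    z hx₁ hx₂ hzs hz hy₁ hy₂ hys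
end

section
/- Assume κ₂ ≠ ν and β₁ ≠ 1. Then x₁ = 0 is a root of the coexistence quadratic φ₂·X² + φ₁·X + φ₀ (i.e. φ₀ = 0) if and only if the transcritical bifurcation relation T₅₇ holds: α·(κ₂ − ν)·(β₁ − 1) = (β₂ − 1)·ζ. Moreover, when T₅₇ holds, the coexistence-branch point at x₁ = 0, namely (0, (ζ − A·0)/B, yˢ, y₁, y₂, zˢ, z) with x₂ = ζ/B, z = (β₁ − β₂·x₂)/α, zˢ = (1 − β₁ + (β₂ − 1)·x₂)/αˢ, y₁ = (C/μ)·0·z = 0, y₂ = (α/γ₂)·x₂·z, yˢ = 0, coincides with the spec-free equilibrium v₅ given by x₁ = 0, x₂ = ζ/B, yˢ = 0, y₁ = 0, y₂ = ζ(β₁B − β₂ζ)/(B²γ₂), zˢ = 0, z = β₁/α − β₂ζ/(αB). -/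
theorem mul_mul_sub_add_mul_sub_eq_zero_iff {R : Type*} [CommRing R] [NoZeroDivisors R]
    {a b β₁ β₂ ζ B : R}
    (hab : a * b ≠ 0) :
    a * b * ((1 - β₂) * ζ + B * (β₁ - 1)) = 0 ↔ B * (β₁ - 1) = (β₂ - 1) * ζ := by
  rw [mul_eq_zero, or_iff_right hab]
  constructor <;> intro h <;> linear_combination h

theorem one_sub_add_mul_div_eq_zero {K : Type*} [Field K] {β₁ β₂ ζ B : K} (hB : B ≠ 0)
    (hT : B * (β₁ - 1) = (β₂ - 1) * ζ) :
    1 - β₁ + (β₂ - 1) * (ζ / B) = 0 := by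
  rw [← mul_div_assoc, ← hT, mul_div_cancel_left₀ _ hB]
  ring

theorem T₅₇_root_and_coincidence_with_v₅_general
    (α αs β₁ β₂ γ₂ κ₂ ν ζs ζ : ℝ)
    (hα : 0 < α) (hζs : 0 < ζs) (hκν : κ₂ ≠ ν)
    (A : ℝ) (B : ℝ) (hB : B = α * (κ₂ - ν))
    (φ₀ : ℝ)
    (hφ₀ : φ₀ = α * ζs * ((1 - β₂) * ζ + B * (β₁ - 1)))
    (x₂ z zs y₂ : ℝ)
    (hx₂ : x₂ = (ζ - A * 0) / B)
    (hz : z = (β₁ - β₂ * x₂) / α)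
    (hzs : zs = (1 - β₁ + (β₂ - 1) * x₂) / αs)
    (hy₂ : y₂ = (α / γ₂) * x₂ * z) :
    (φ₀ = 0 ↔ α * (κ₂ - ν) * (β₁ - 1) = (β₂ - 1) * ζ) ∧
    (α * (κ₂ - ν) * (β₁ - 1) = (β₂ - 1) * ζ →
      ((0 : ℝ), x₂, (0 : ℝ), (0 : ℝ), y₂, zs, z) =
        ((0 : ℝ), ζ / B, (0 : ℝ), (0 : ℝ), ζ * (β₁ * B - β₂ * ζ) / (B ^ 2 * γ₂),
          (0 : ℝ), β₁ / α - β₂ * ζ / (α * B))) := by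
  have hB0 : B ≠ 0 := hB ▸ mul_ne_zero hα.ne' (sub_ne_zero.mpr hκν)
  rw [mul_zero, sub_zero] at hx₂
  rw [← hB]
  refine ⟨hφ₀ ▸ mul_mul_sub_add_mul_sub_eq_zero_iff (mul_ne_zero hα.ne' hζs.ne'), fun hT => ?_⟩
  subst hx₂ hz hy₂
  have hzs0 : zs = 0 := by rw [hzs, one_sub_add_mul_div_eq_zero hB0 hT, zero_div]
  simp only [Prod.mk.injEq, hzs0, true_and]
  constructor
  · field_simp
  · ring

theorem T₅₇_root_and_coincidence_with_v₅
    (α αs β₁ β₂ μ γs γ₁ γ₂ κ₁ κ₂ ν νs ζs ζ : ℝ)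
    (hα : 0 < α) (hαs : 0 < αs) (hβ₁pos : 0 < β₁) (hβ₂pos : 0 < β₂)
    (hμ : 0 < μ) (hγs : 0 < γs) (hγ₁ : 0 < γ₁) (hγ₂ : 0 < γ₂)
    (hκ₁ : 0 < κ₁) (hκ₂ : 0 < κ₂) (hν : 0 < ν) (hνs : 0 < νs)
    (hζs : 0 < ζs) (hζ : 0 < ζ)
    (hκν : κ₂ ≠ ν) (hβ₁1 : β₁ ≠ 1)
    (A : ℝ) (hA : A = α * (γ₁ * κ₁ / (μ + γ₁) - ν))
    (B : ℝ) (hB : B = α * (κ₂ - ν))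
    (C : ℝ) (hC : C = α * μ / (μ + γ₁))
    (D : ℝ) (hD : D = αs * (νs - 1))
    (φ₂ φ₁ φ₀ : ℝ)
    (hφ₂ : φ₂ = (A - B) * ((D * α + C * αs) * β₂ - D * α))
    (hφ₁ : φ₁ = (A - B) * α * ζs * (β₂ - 1) + (D * α + C * αs) * (B * β₁ - ζ * β₂) + D * α * (ζ - B))
    (hφ₀ : φ₀ = α * ζs * ((1 - β₂) * ζ + B * (β₁ - 1)))
    (x₂ z zs y₂ : ℝ)
    (hx₂ : x₂ = (ζ - A * 0) / B)
    (hz : z = (β₁ - β₂ * x₂) / α)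
    (hzs : zs = (1 - β₁ + (β₂ - 1) * x₂) / αs)
    (hy₂ : y₂ = (α / γ₂) * x₂ * z) :
    (φ₀ = 0 ↔ α * (κ₂ - ν) * (β₁ - 1) = (β₂ - 1) * ζ) ∧
    (α * (κ₂ - ν) * (β₁ - 1) = (β₂ - 1) * ζ →
      ((0 : ℝ), x₂, (0 : ℝ), (0 : ℝ), y₂, zs, z) =
        ((0 : ℝ), ζ / B, (0 : ℝ), (0 : ℝ), ζ * (β₁ * B - β₂ * ζ) / (B ^ 2 * γ₂),
          (0 : ℝ), β₁ / α - β₂ * ζ / (α * B))) :=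
  T₅₇_root_and_coincidence_with_v₅_general α αs β₁ β₂ γ₂ κ₂ ν ζs ζ hα hζs hκν A B hB φ₀ hφ₀ x₂ z zs
    y₂ hx₂ hz hzs hy₂
end
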